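/- The generating function Z(x) = Σ_{n≥0} z(n)xⁿ of the numbers of zigzag stacks satisfies, as formal power series, x²(x−1)Z(x)³ + 2x·Z(x)² − (x+1)·Z(x) + 1 = 0. -/

import Mathlib

open PowerSeries

namespace Paper

/-- The arc set of a diagram: a finite set of pairs `(i,j)`. -/
abbrev Arcs := Finset (ℕ × ℕ)

/-- A diagram on `[n] = {1,…,n}`: every arc `(i,j)` satisfies `1 ≤ i < j ≤ n`. -/
def IsDiagram (n : ℕ) (A : Arcs) : Prop :=
  ∀ p ∈ A, 1 ≤ p.1 ∧ p.1 < p.2 ∧ p.2 ≤ n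

/-- Two arcs `p = (i₁,j₁)` and `q = (i₂,j₂)` cross if `i₁ < i₂ < j₁ < j₂`. -/
def Crossing (p q : ℕ × ℕ) : Prop :=
  p.1 < q.1 ∧ q.1 < p.2 ∧ p.2 < q.2

/-- A stack on `[n]`: a diagram with no two crossing arcs. -/
def IsStack (n : ℕ) (A : Arcs) : Prop :=
  IsDiagram n A ∧ ∀ p ∈ A, ∀ q ∈ A, ¬ Crossing p q

/-- Left-degree of vertex `v`: number of arcs `(u,v)` with `u < v`. -/
def ld (A : Arcs) (v : ℕ) : ℕ := (A.filter fun p => p.2 = v).card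

/-- Right-degree of vertex `v`: number of arcs `(v,w)` with `v < w`. -/
def rd (A : Arcs) (v : ℕ) : ℕ := (A.filter fun p => p.1 = v).card

/-- Degree of a vertex. -/
def deg (A : Arcs) (v : ℕ) : ℕ := ld A v + rd A v

/-- A zigzag stack: a stack where every vertex has degree ≤ 2 and no vertex has both
positive left-degree and positive right-degree. -/
def IsZigzag (n : ℕ) (A : Arcs) : Prop :=
  IsStack n A ∧ (∀ v, deg A v ≤ 2) ∧ ∀ v, ¬ (1 ≤ ld A v ∧ 1 ≤ rd A v)

/-- Adjacency in the underlying graph of a diagram. -/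
def adj (A : Arcs) (u v : ℕ) : Prop := (u, v) ∈ A ∨ (v, u) ∈ A

/-- `v` lies in the primary component (connected component of vertex 1). -/
def inPrimary (A : Arcs) (v : ℕ) : Prop := Relation.ReflTransGen (adj A) 1 v

/-- The underlying graph on vertex set `[n]` is connected. -/
def ConnectedOn (n : ℕ) (A : Arcs) : Prop :=
  ∀ u v, 1 ≤ u → u ≤ n → 1 ≤ v → v ≤ n → Relation.ReflTransGen (adj A) u v

/-- Number of stacks on `[n]`. -/
noncomputable def stackCount (n : ℕ) : ℕ := Nat.card {A : Arcs // IsStack n A}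

/-- Number of zigzag stacks on `[n]`. -/
noncomputable def zigzagCount (n : ℕ) : ℕ := Nat.card {A : Arcs // IsZigzag n A}

/-- Number of connected zigzag stacks on `[n]`. -/
noncomputable def connZigzagCount (n : ℕ) : ℕ :=
  Nat.card {A : Arcs // IsZigzag n A ∧ ConnectedOn n A}

/-- The ordinary generating function of the numbers of zigzag stacks. -/
noncomputable def Zgf : PowerSeries ℚ := PowerSeries.mk fun n => (zigzagCount n : ℚ)

/-- The power series variable over ℚ. -/
noncomputable def Xq : PowerSeries ℚ := PowerSeries.X

/-- An `m`-reduced zigzag stack on `[n]`: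
(1) `ld(i) + rd(i+m−1) ≤ 2` for `1 ≤ i ≤ n−m+1` (written additively);
(2) if `1 ≤ i < j ≤ n` with `ld(i) > 0` and `rd(j) > 0` then `j − i ≥ m−1`. -/
def MRed (m n : ℕ) (A : Arcs) : Prop :=
  IsZigzag n A ∧
  (∀ i, 1 ≤ i → i + m ≤ n + 1 → ld A i + rd A (i + m - 1) ≤ 2) ∧
  (∀ i j, 1 ≤ i → i < j → j ≤ n → 0 < ld A i → 0 < rd A j → i + m ≤ j + 1)

/-- An `m`-regular linear stack on `[n]`: every arc has length ≥ m and every vertex has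
degree ≤ 2. -/
def RegLinear (m n : ℕ) (A : Arcs) : Prop :=
  IsStack n A ∧ (∀ p ∈ A, p.1 + m ≤ p.2) ∧ ∀ v, deg A v ≤ 2

/-- Number of `m`-reduced zigzag stacks on `[n]`. -/
noncomputable def zm (m n : ℕ) : ℕ := Nat.card {A : Arcs // MRed m n A}

/-- Number of `m`-regular linear stacks on `[n]`. -/
noncomputable def rmc (m n : ℕ) : ℕ := Nat.card {A : Arcs // RegLinear m n A}

/-- Generating function of `m`-reduced zigzag stacks. -/
noncomputable def Zm (m : ℕ) : PowerSeries ℚ := PowerSeries.mk fun n => (zm m n : ℚ)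

/-- Generating function of `m`-regular linear stacks. -/
noncomputable def Rm (m : ℕ) : PowerSeries ℚ := PowerSeries.mk fun n => (rmc m n : ℚ)

/-- Extended left-degree function used to define boundary types. -/
def extLD (A : Arcs) (l a v : ℕ) : ℕ :=
  if v = 0 then a else if v = l + 1 then 0 else ld A v

/-- Extended right-degree function used to define boundary types. -/
def extRD (A : Arcs) (l b v : ℕ) : ℕ :=
  if v = 0 then 0 else if v = l + 1 then b else rd A v

/-- An `m`-reduced zigzag stack on `[l]` of boundary type `(a,b)`. -/
def BoundaryType (m a b l : ℕ) (A : Arcs) : Prop :=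
  MRed m l A ∧
  (∀ i, i + m ≤ l + 2 → extLD A l a i + extRD A l b (i + m - 1) ≤ 2) ∧
  (∀ i j, i < j → j ≤ l + 1 → 0 < extLD A l a i → 0 < extRD A l b j → i + m ≤ j + 1)

/-- Number of boundary-type-`(a,b)` structures on `[n]`. -/
noncomputable def tc (m a b n : ℕ) : ℕ := Nat.card {A : Arcs // BoundaryType m a b n A}

/-- Generating functions `T_i(x)`; types T₁,…,T₆ correspond to `(a,b)` =
(0,0), (1,0), (1,1), (2,0), (2,1), (2,2). -/
noncomputable def Tgf (m a b : ℕ) : PowerSeries ℚ := PowerSeries.mk fun n => (tc m a b n : ℚ)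

/-- Type G : `m`-reduced zigzag stack with `deg(1) ≤ 1`. -/
def TypeG (m n : ℕ) (A : Arcs) : Prop := MRed m n A ∧ deg A 1 ≤ 1

/-- Type H : `m`-reduced zigzag stack with `deg(1) ≤ 1` and `deg(n) ≤ 1`. -/
def TypeH (m n : ℕ) (A : Arcs) : Prop := MRed m n A ∧ deg A 1 ≤ 1 ∧ deg A n ≤ 1

noncomputable def gcnt (m n : ℕ) : ℕ := Nat.card {A : Arcs // TypeG m n A}
noncomputable def hcnt (m n : ℕ) : ℕ := Nat.card {A : Arcs // TypeH m n A}

/-- Generating function `G(x)`. -/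
noncomputable def Ggf (m : ℕ) : PowerSeries ℚ := PowerSeries.mk fun n => (gcnt m n : ℚ)

/-- Generating function `H(x)`. -/
noncomputable def Hgf (m : ℕ) : PowerSeries ℚ := PowerSeries.mk fun n => (hcnt m n : ℚ)

/-- The reduction map θ_m: replace each arc `(i,j)` by `(i, j−m+1)`. -/
def theta (m : ℕ) (A : Arcs) : Arcs := A.image fun p => (p.1, p.2 - m + 1)

/-- Relabel a structure whose arcs lie in `{c+1, …}` down by `c`. -/
def shiftDown (c : ℕ) (A : Arcs) : Arcs := A.image fun p => (p.1 - c, p.2 - c)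

/-- Conditions (1) and (2) of `m`-reducedness restricted to a set `J` of vertices. -/
def CondOn (m : ℕ) (A : Arcs) (J : Finset ℕ) : Prop :=
  (∀ i, i ∈ J → i + m - 1 ∈ J → ld A i + rd A (i + m - 1) ≤ 2) ∧
  (∀ i j, i ∈ J → j ∈ J → i < j → 0 < ld A i → 0 < rd A j → i + m ≤ j + 1)

/-!
Sort the zigzag stacks by the arcs leaving vertex `1`, and let `F_r` be the generating function
of those with `rd 1 ≤ r`, so that `F_2 = Z`. If vertex `1` is isolated, the rest is an arbitrary
zigzag stack on `n` vertices, whence `F_0 = 1 + x Z`. Otherwise let `(1, a + 1)` be the shortest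
arc at `1`: the arcs below it form a zigzag stack on `[2, a + 1]` with `ld (a + 1) ≤ 1`, and the
remaining arcs live on `{1} ∪ [a + 2, n + 1]`, where they form a zigzag stack with one arc fewer
at its first vertex. Reflection `i ↦ n + 1 - i` shows that the first factor is counted by `F_1`,
so `F_(r+1) = 1 + x Z + (F_1 - 1)(F_r - 1)` for `r ≤ 1`. With `G = F_1` the cases `r = 0, 1` read
`(G - 1)(1 - x Z) = x Z` and `Z = 1 + x Z + (G - 1)²`; eliminating `G` gives the cubic.
-/

def ZigzagDegrees (l r : ℕ) : Prop := l + r ≤ 2 ∧ ¬(1 ≤ l ∧ 1 ≤ r)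

lemma ZigzagDegrees.mono {l r l' r' : ℕ} (h : ZigzagDegrees l r) (hl : l' ≤ l) (hr : r' ≤ r) :
    ZigzagDegrees l' r' := by
  unfold ZigzagDegrees at *
  omega

lemma ZigzagDegrees.symm {l r : ℕ} (h : ZigzagDegrees l r) : ZigzagDegrees r l := by
  unfold ZigzagDegrees at *
  omega

lemma zigzagDegrees_zero_zero : ZigzagDegrees 0 0 := by
  unfold ZigzagDegrees
  omega

lemma isZigzag_iff {n : ℕ} {A : Arcs} :
    IsZigzag n A ↔ IsStack n A ∧ ∀ v, ZigzagDegrees (ld A v) (rd A v) := by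
  simp only [IsZigzag, ZigzagDegrees, deg, forall_and]

section Degrees

variable {A B : Arcs} {p : ℕ × ℕ} {v : ℕ}

lemma ld_eq_zero_iff : ld A v = 0 ↔ ∀ p ∈ A, p.2 ≠ v := by
  simp [ld, Finset.filter_eq_empty_iff]

lemma rd_eq_zero_iff : rd A v = 0 ↔ ∀ p ∈ A, p.1 ≠ v := by
  simp [rd, Finset.filter_eq_empty_iff]

lemma ld_mono (h : A ⊆ B) (v : ℕ) : ld A v ≤ ld B v :=
  Finset.card_le_card (Finset.filter_subset_filter _ h)

lemma rd_mono (h : A ⊆ B) (v : ℕ) : rd A v ≤ rd B v :=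
  Finset.card_le_card (Finset.filter_subset_filter _ h)

lemma ld_union_le (A B : Arcs) (v : ℕ) : ld (A ∪ B) v ≤ ld A v + ld B v := by
  unfold ld
  rw [Finset.filter_union]
  exact Finset.card_union_le _ _

lemma rd_union_le (A B : Arcs) (v : ℕ) : rd (A ∪ B) v ≤ rd A v + rd B v := by
  unfold rd
  rw [Finset.filter_union]
  exact Finset.card_union_le _ _

lemma ld_insert (h : p ∉ A) (v : ℕ) : ld (insert p A) v = ld A v + if p.2 = v then 1 else 0 := by
  unfold ld
  rw [Finset.filter_insert]
  split_ifs
  · exact Finset.card_insert_of_notMem fun hp => h (Finset.mem_of_mem_filter _ hp)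
  · rfl

lemma rd_insert (h : p ∉ A) (v : ℕ) : rd (insert p A) v = rd A v + if p.1 = v then 1 else 0 := by
  unfold rd
  rw [Finset.filter_insert]
  split_ifs
  · exact Finset.card_insert_of_notMem fun hp => h (Finset.mem_of_mem_filter _ hp)
  · rfl

end Degrees

section Zigzag

variable {m n : ℕ} {A B S : Arcs}

lemma IsZigzag.subset (hA : IsZigzag n A) (hS : S ⊆ A) (hSm : IsDiagram m S) : IsZigzag m S := by
  rw [isZigzag_iff] at hA ⊢
  exact ⟨⟨hSm, fun p hp q hq => hA.1.2 p (hS hp) q (hS hq)⟩,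
    fun v => (hA.2 v).mono (ld_mono hS v) (rd_mono hS v)⟩

lemma isZigzag_zero_iff : IsZigzag 0 A ↔ A = ∅ := by
  constructor
  · intro hA
    refine Finset.eq_empty_of_forall_notMem fun p hp => ?_
    have := hA.1.1 p hp
    omega
  · rintro rfl
    rw [isZigzag_iff]
    exact ⟨⟨fun p hp => by simp at hp, fun p hp => by simp at hp⟩,
      fun v => zigzagDegrees_zero_zero⟩

lemma IsZigzag.union (hA : IsZigzag n A) (hB : IsZigzag n B)
    (hcross : ∀ p ∈ A, ∀ q ∈ B, ¬Crossing p q ∧ ¬Crossing q p)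
    (hdisj : ∀ p ∈ A, ∀ q ∈ B, p.1 ≠ q.1 ∧ p.1 ≠ q.2 ∧ p.2 ≠ q.1 ∧ p.2 ≠ q.2) :
    IsZigzag n (A ∪ B) := by
  rw [isZigzag_iff] at hA hB ⊢
  refine ⟨⟨fun p hp => ?_, fun p hp q hq => ?_⟩, fun v => ?_⟩
  · rcases Finset.mem_union.1 hp with hp | hp
    exacts [hA.1.1 p hp, hB.1.1 p hp]
  · rcases Finset.mem_union.1 hp with hp | hp <;> rcases Finset.mem_union.1 hq with hq | hq
    exacts [hA.1.2 p hp q hq, (hcross p hp q hq).1, (hcross q hq p hp).2, hB.1.2 p hp q hq]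
  · have hl := ld_union_le A B v
    have hr := rd_union_le A B v
    by_cases hv : ∃ q ∈ B, q.1 = v ∨ q.2 = v
    · obtain ⟨q, hq, hqv⟩ := hv
      have hlA : ld A v = 0 := ld_eq_zero_iff.2 fun p hp => by have := hdisj p hp q hq; omega
      have hrA : rd A v = 0 := rd_eq_zero_iff.2 fun p hp => by have := hdisj p hp q hq; omega
      exact (hB.2 v).mono (by omega) (by omega)
    · push Not at hv
      have hlB : ld B v = 0 := ld_eq_zero_iff.2 fun q hq => (hv q hq).2
      have hrB : rd B v = 0 := rd_eq_zero_iff.2 fun q hq => (hv q hq).1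
      exact (hA.2 v).mono (by omega) (by omega)

lemma IsZigzag.insert {i j : ℕ} (hA : IsZigzag n A) (hi : 1 ≤ i) (hij : i < j) (hjn : j ≤ n)
    (hcross : ∀ q ∈ A, ¬Crossing (i, j) q ∧ ¬Crossing q (i, j)) (hnot : (i, j) ∉ A)
    (hldi : ld A i = 0) (hrdi : rd A i ≤ 1) (hldj : ld A j ≤ 1) (hrdj : rd A j = 0) :
    IsZigzag n (insert (i, j) A) := by
  rw [isZigzag_iff] at hA ⊢
  refine ⟨⟨fun p hp => ?_, fun p hp q hq => ?_⟩, fun v => ?_⟩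
  · rcases Finset.mem_insert.1 hp with rfl | hp
    exacts [⟨hi, hij, hjn⟩, hA.1.1 p hp]
  · rcases Finset.mem_insert.1 hp with rfl | hp <;> rcases Finset.mem_insert.1 hq with rfl | hq
    · exact fun h => absurd h.1 (lt_irrefl _)
    exacts [(hcross q hq).1, (hcross p hp).2, hA.1.2 p hp q hq]
  · rw [ld_insert hnot, rd_insert hnot]
    unfold ZigzagDegrees
    have hv := hA.2 v
    unfold ZigzagDegrees at hv
    dsimp only
    split_ifs with h1 h2 h2
    · omega
    · subst h1; omega
    · subst h2; omega
    · omega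

end Zigzag

def relabel (f : ℕ → ℕ) (A : Arcs) : Arcs := A.image (Prod.map f f)

section Relabel

variable {f g : ℕ → ℕ} {A : Arcs} {m n : ℕ}

lemma relabel_relabel (f g : ℕ → ℕ) (A : Arcs) : relabel g (relabel f A) = relabel (g ∘ f) A := by
  simp only [relabel, Finset.image_image, Prod.map_comp_map]

lemma relabel_congr (h : ∀ p ∈ A, f p.1 = g p.1 ∧ f p.2 = g p.2) : relabel f A = relabel g A :=
  Finset.image_congr fun p hp => Prod.ext (h p hp).1 (h p hp).2

lemma relabel_id (A : Arcs) : relabel id A = A := by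
  simp [relabel]

lemma exists_of_mem_relabel {p : ℕ × ℕ} (hp : p ∈ relabel f A) :
    ∃ q ∈ A, p = (f q.1, f q.2) := by
  obtain ⟨q, hq, rfl⟩ := Finset.mem_image.1 hp
  exact ⟨q, hq, rfl⟩

lemma relabel_injective (hf : Function.Injective f) : Function.Injective (relabel f) :=
  Finset.image_injective (hf.prodMap hf)

lemma ld_relabel (hf : Function.Injective f) (A : Arcs) (v : ℕ) :
    ld (relabel f A) (f v) = ld A v := by
  unfold ld relabel
  rw [Finset.filter_image, Finset.card_image_of_injective _ (hf.prodMap hf)]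
  simp [hf.eq_iff]

lemma rd_relabel (hf : Function.Injective f) (A : Arcs) (v : ℕ) :
    rd (relabel f A) (f v) = rd A v := by
  unfold rd relabel
  rw [Finset.filter_image, Finset.card_image_of_injective _ (hf.prodMap hf)]
  simp [hf.eq_iff]

lemma ld_relabel_of_notMem_range {w : ℕ} (hw : w ∉ Set.range f) : ld (relabel f A) w = 0 :=
  ld_eq_zero_iff.2 fun p hp => by
    obtain ⟨q, -, rfl⟩ := Finset.mem_image.1 hp
    exact fun h => hw ⟨q.2, h⟩

lemma rd_relabel_of_notMem_range {w : ℕ} (hw : w ∉ Set.range f) : rd (relabel f A) w = 0 :=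
  rd_eq_zero_iff.2 fun p hp => by
    obtain ⟨q, -, rfl⟩ := Finset.mem_image.1 hp
    exact fun h => hw ⟨q.1, h⟩

lemma crossing_map_iff (hf : StrictMono f) (p q : ℕ × ℕ) :
    Crossing (Prod.map f f p) (Prod.map f f q) ↔ Crossing p q := by
  simp only [Crossing, Prod.map_fst, Prod.map_snd, hf.lt_iff_lt]

lemma isZigzag_relabel_iff (hf : StrictMono f) (hA : IsDiagram m A)
    (hfA : IsDiagram n (relabel f A)) : IsZigzag n (relabel f A) ↔ IsZigzag m A := by
  rw [isZigzag_iff, isZigzag_iff, IsStack, IsStack]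
  refine and_congr (and_congr (iff_of_true hfA hA) ?_) ⟨fun h v => ?_, fun h w => ?_⟩
  · simp only [relabel, Finset.forall_mem_image, crossing_map_iff hf]
  · simpa only [ld_relabel hf.injective, rd_relabel hf.injective] using h (f v)
  · by_cases hw : w ∈ Set.range f
    · obtain ⟨v, rfl⟩ := hw
      simpa only [ld_relabel hf.injective, rd_relabel hf.injective] using h v
    · simpa only [ld_relabel_of_notMem_range hw, rd_relabel_of_notMem_range hw]
        using zigzagDegrees_zero_zero

end Relabel

def insertVertices (k c v : ℕ) : ℕ := if v < k then v else v + c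

def removeVertices (k c v : ℕ) : ℕ := if v < k then v else v - c

section InsertVertices

variable {k c m : ℕ} {A S : Arcs}

lemma strictMono_insertVertices (k c : ℕ) : StrictMono (insertVertices k c) := by
  intro u v huv
  unfold insertVertices
  split_ifs <;> omega

lemma notMem_range_insertVertices {w : ℕ} (hkw : k ≤ w) (hw : w < k + c) :
    w ∉ Set.range (insertVertices k c) := by
  rintro ⟨v, rfl⟩
  unfold insertVertices at hkw hw
  split_ifs at hkw hw <;> omega

lemma relabel_insertVertices_removeVertices
    (h : ∀ p ∈ S, (p.1 < k ∨ k + c ≤ p.1) ∧ (p.2 < k ∨ k + c ≤ p.2)) :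
    relabel (insertVertices k c) (relabel (removeVertices k c) S) = S := by
  rw [relabel_relabel]
  refine (relabel_congr fun p hp => ?_).trans (relabel_id S)
  have := h p hp
  simp only [Function.comp_apply, insertVertices, removeVertices, id]
  constructor <;> split_ifs <;> omega

lemma IsDiagram.relabel_insertVertices (hA : IsDiagram m A) (k c : ℕ) :
    IsDiagram (m + c) (relabel (insertVertices k c) A) := by
  intro p hp
  obtain ⟨q, hq, rfl⟩ := exists_of_mem_relabel hp
  have := hA q hq
  simp only [insertVertices]
  split_ifs <;> omega

lemma IsZigzag.relabel_insertVertices (hA : IsZigzag m A) (k c : ℕ) :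
    IsZigzag (m + c) (relabel (insertVertices k c) A) :=
  (isZigzag_relabel_iff (strictMono_insertVertices k c) hA.1.1
    (hA.1.1.relabel_insertVertices k c)).2 hA

lemma IsZigzag.relabel_removeVertices {n : ℕ} (hA : IsZigzag n A) (hS : S ⊆ A)
    (hgap : ∀ p ∈ S, (p.1 < k ∨ k + c ≤ p.1) ∧ (p.2 < k ∨ k + c ≤ p.2))
    (hd : IsDiagram m (relabel (removeVertices k c) S)) :
    IsZigzag m (relabel (removeVertices k c) S) := by
  have hdc := hd.relabel_insertVertices k c
  refine (isZigzag_relabel_iff (strictMono_insertVertices k c) hd hdc).1 ?_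
  rw [relabel_insertVertices_removeVertices hgap] at hdc ⊢
  exact hA.subset hS hdc

end InsertVertices

/-- `B`, on `[a]`, is shifted to `[2, a + 1]` under the new arc `(1, a + 1)`; `C` keeps its
vertex `1` and its other vertices are moved past `a + 1`. -/
def attachFirstArc (a : ℕ) (B C : Arcs) : Arcs :=
  insert (1, a + 1) (relabel (insertVertices 1 1) B ∪ relabel (insertVertices 2 a) C)

def nestedArcs (a : ℕ) (A : Arcs) : Arcs := A.filter fun p => 2 ≤ p.1 ∧ p.2 ≤ a + 1

def outerArcs (a : ℕ) (A : Arcs) : Arcs := A.filter fun p => (p.1 = 1 ∨ a + 1 < p.1) ∧ a + 1 < p.2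

section Attach

variable {a b n : ℕ} {A B C : Arcs}

lemma mem_relabel_nested (hB : IsDiagram a B) {p : ℕ × ℕ}
    (hp : p ∈ relabel (insertVertices 1 1) B) : 2 ≤ p.1 ∧ p.1 < p.2 ∧ p.2 ≤ a + 1 := by
  obtain ⟨q, hq, rfl⟩ := exists_of_mem_relabel hp
  have := hB q hq
  simp only [insertVertices]
  split_ifs <;> omega

lemma mem_relabel_outer (hC : IsDiagram b C) {p : ℕ × ℕ}
    (hp : p ∈ relabel (insertVertices 2 a) C) :
    (p.1 = 1 ∨ a + 2 ≤ p.1) ∧ p.1 < p.2 ∧ a + 2 ≤ p.2 ∧ p.2 ≤ a + b := by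
  obtain ⟨q, hq, rfl⟩ := exists_of_mem_relabel hp
  have := hC q hq
  simp only [insertVertices]
  split_ifs <;> omega

lemma mem_attachFirstArc (hB : IsDiagram a B) (hC : IsDiagram b C) {p : ℕ × ℕ}
    (hp : p ∈ attachFirstArc a B C) :
    p = (1, a + 1) ∨ (2 ≤ p.1 ∧ p.1 < p.2 ∧ p.2 ≤ a + 1) ∨
      ((p.1 = 1 ∨ a + 2 ≤ p.1) ∧ p.1 < p.2 ∧ a + 2 ≤ p.2 ∧ p.2 ≤ a + b) := by
  rcases Finset.mem_insert.1 hp with hp | hp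
  · exact Or.inl hp
  rcases Finset.mem_union.1 hp with hp | hp
  exacts [Or.inr (Or.inl (mem_relabel_nested hB hp)), Or.inr (Or.inr (mem_relabel_outer hC hp))]

lemma le_of_mem_attachFirstArc (hB : IsDiagram a B) (hC : IsDiagram b C) {p : ℕ × ℕ}
    (hp : p ∈ attachFirstArc a B C) (hp1 : p.1 = 1) : a + 1 ≤ p.2 := by
  rcases mem_attachFirstArc hB hC hp with rfl | h | h <;> omega

lemma notMem_relabel_union (hB : IsDiagram a B) (hC : IsDiagram b C) :
    (1, a + 1) ∉ relabel (insertVertices 1 1) B ∪ relabel (insertVertices 2 a) C := by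
  intro h
  rcases Finset.mem_union.1 h with h | h
  · have := mem_relabel_nested hB h
    omega
  · have := mem_relabel_outer hC h
    omega

lemma rd_attachFirstArc_one (hB : IsDiagram a B) (hC : IsDiagram b C) :
    rd (attachFirstArc a B C) 1 = rd C 1 + 1 := by
  rw [attachFirstArc, rd_insert (notMem_relabel_union hB hC), if_pos rfl]
  have hB1 : rd (relabel (insertVertices 1 1) B) 1 = 0 :=
    rd_eq_zero_iff.2 fun p hp => by have := mem_relabel_nested hB hp; omega
  have hC1 : rd (relabel (insertVertices 2 a) C) 1 = rd C 1 :=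
    rd_relabel (strictMono_insertVertices 2 a).injective C 1
  have := rd_union_le (relabel (insertVertices 1 1) B) (relabel (insertVertices 2 a) C) 1
  have := rd_mono (Finset.subset_union_right (s₁ := relabel (insertVertices 1 1) B)
    (s₂ := relabel (insertVertices 2 a) C)) 1
  omega

lemma isZigzag_relabel_union (hB : IsZigzag a B) (hC : IsZigzag b C) (hb : 1 ≤ b) :
    IsZigzag (a + b) (relabel (insertVertices 1 1) B ∪ relabel (insertVertices 2 a) C) := by
  have hB' : IsZigzag (a + b) (relabel (insertVertices 1 1) B) :=
    (hB.relabel_insertVertices 1 1).subset subset_rfl fun p hp => by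
      have := mem_relabel_nested hB.1.1 hp
      omega
  have hC' : IsZigzag (a + b) (relabel (insertVertices 2 a) C) := by
    rw [add_comm]
    exact hC.relabel_insertVertices 2 a
  refine hB'.union hC' (fun p hp q hq => ?_) (fun p hp q hq => ?_) <;>
  · have := mem_relabel_nested hB.1.1 hp
    have := mem_relabel_outer hC.1.1 hq
    try simp only [Crossing]
    omega

lemma IsZigzag.attachFirstArc (hB : IsZigzag a B) (hBa : ld B a ≤ 1) (hC : IsZigzag b C)
    (hC1 : rd C 1 ≤ 1) (ha : 1 ≤ a) (hb : 1 ≤ b) : IsZigzag (a + b) (attachFirstArc a B C) := by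
  have hU := isZigzag_relabel_union hB hC hb
  set B' := relabel (insertVertices 1 1) B
  set C' := relabel (insertVertices 2 a) C
  have hB'b : ∀ p ∈ B', 2 ≤ p.1 ∧ p.1 < p.2 ∧ p.2 ≤ a + 1 := fun p => mem_relabel_nested hB.1.1
  have hC'b : ∀ p ∈ C', (p.1 = 1 ∨ a + 2 ≤ p.1) ∧ p.1 < p.2 ∧ a + 2 ≤ p.2 ∧ p.2 ≤ a + b :=
    fun p => mem_relabel_outer hC.1.1
  have hldB' : ld B' (a + 1) = ld B a := by
    have h := ld_relabel (strictMono_insertVertices 1 1).injective B a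
    rwa [insertVertices, if_neg (by omega)] at h
  have hrdC' : rd C' 1 = rd C 1 := rd_relabel (strictMono_insertVertices 2 a).injective C 1
  have hldC' : ld C' (a + 1) = 0 := ld_eq_zero_iff.2 fun p hp => by have := hC'b p hp; omega
  have hrdB' : rd B' 1 = 0 := rd_eq_zero_iff.2 fun p hp => by have := hB'b p hp; omega
  have := ld_union_le B' C' (a + 1)
  have := rd_union_le B' C' 1
  refine hU.insert le_rfl (by omega) (by omega) (fun q hq => ?_)
    (notMem_relabel_union hB.1.1 hC.1.1) ?_ (by omega) (by omega) ?_
  · unfold Crossing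
    rcases Finset.mem_union.1 hq with hq | hq
    · have := hB'b q hq
      omega
    · have := hC'b q hq
      omega
  · exact ld_eq_zero_iff.2 fun p hp => by have := hU.1.1 p hp; omega
  · refine rd_eq_zero_iff.2 fun p hp => ?_
    rcases Finset.mem_union.1 hp with hp | hp
    · have := hB'b p hp
      omega
    · have := hC'b p hp
      omega

lemma nestedArcs_attachFirstArc (hB : IsDiagram a B) (hC : IsDiagram b C) :
    nestedArcs a (attachFirstArc a B C) = relabel (insertVertices 1 1) B := by
  ext p
  simp only [nestedArcs, Finset.mem_filter]
  constructor
  · rintro ⟨hp, hp'⟩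
    rcases Finset.mem_union.1 ((Finset.mem_insert.1 hp).resolve_left (by rintro rfl; omega))
      with h | h
    · exact h
    · have := mem_relabel_outer hC h
      omega
  · intro hp
    have := mem_relabel_nested hB hp
    exact ⟨Finset.mem_insert_of_mem (Finset.mem_union_left _ hp), by omega⟩

lemma outerArcs_attachFirstArc (hB : IsDiagram a B) (hC : IsDiagram b C) :
    outerArcs a (attachFirstArc a B C) = relabel (insertVertices 2 a) C := by
  ext p
  simp only [outerArcs, Finset.mem_filter]
  constructor
  · rintro ⟨hp, hp'⟩
    rcases Finset.mem_union.1 ((Finset.mem_insert.1 hp).resolve_left (by rintro rfl; omega))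
      with h | h
    · have := mem_relabel_nested hB h
      omega
    · exact h
  · intro hp
    have := mem_relabel_outer hC hp
    exact ⟨Finset.mem_insert_of_mem (Finset.mem_union_right _ hp), by omega⟩

lemma attachFirstArc_inj {a' b' : ℕ} {B' C' : Arcs} (hB : IsDiagram a B) (hC : IsDiagram b C)
    (hB' : IsDiagram a' B') (hC' : IsDiagram b' C')
    (h : attachFirstArc a B C = attachFirstArc a' B' C') : a = a' ∧ B = B' ∧ C = C' := by
  have h₁ := le_of_mem_attachFirstArc hB' hC' (p := (1, a + 1))
    (by rw [← h]; exact Finset.mem_insert_self _ _) rfl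
  have h₂ := le_of_mem_attachFirstArc hB hC (p := (1, a' + 1))
    (by rw [h]; exact Finset.mem_insert_self _ _) rfl
  obtain rfl : a = a' := by simp only at h₁ h₂; omega
  refine ⟨rfl, relabel_injective (strictMono_insertVertices 1 1).injective ?_,
    relabel_injective (strictMono_insertVertices 2 a).injective ?_⟩
  · rw [← nestedArcs_attachFirstArc hB hC, ← nestedArcs_attachFirstArc hB' hC', h]
  · rw [← outerArcs_attachFirstArc hB hC, ← outerArcs_attachFirstArc hB' hC', h]

end Attach

section Decompose

variable {a n : ℕ} {A : Arcs}

lemma exists_shortest_arc_from_one (hA : IsDiagram n A) (h1 : rd A 1 ≠ 0) :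
    ∃ a, 1 ≤ a ∧ a + 1 ≤ n ∧ (1, a + 1) ∈ A ∧ ∀ p ∈ A, p.1 = 1 → a + 1 ≤ p.2 := by
  obtain ⟨q, hq, hmin⟩ := Finset.exists_min_image _ Prod.snd (Finset.card_ne_zero.1 h1)
  obtain ⟨hqA, hq1⟩ := Finset.mem_filter.1 hq
  have := hA q hqA
  refine ⟨q.2 - 1, by omega, by omega, ?_, fun p hp hp1 => ?_⟩
  · convert hqA using 1
    ext <;> simp only <;> omega
  · have := hmin p (Finset.mem_filter.2 ⟨hp, hp1⟩)
    omega

lemma eq_insert_nestedArcs_union_outerArcs (hA : IsZigzag n A) (ha : (1, a + 1) ∈ A)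
    (hmin : ∀ p ∈ A, p.1 = 1 → a + 1 ≤ p.2) :
    A = insert (1, a + 1) (nestedArcs a A ∪ outerArcs a A) := by
  have hrd : rd A (a + 1) = 0 := by
    have h := hA.2.2 (a + 1)
    have : 1 ≤ ld A (a + 1) := Finset.card_pos.2 ⟨_, Finset.mem_filter.2 ⟨ha, rfl⟩⟩
    omega
  ext p
  simp only [nestedArcs, outerArcs, Finset.mem_insert, Finset.mem_union, Finset.mem_filter]
  constructor
  · intro hp
    have hb := hA.1.1 p hp
    have hnc := hA.1.2 _ ha p hp
    have hne := rd_eq_zero_iff.1 hrd p hp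
    have := hmin p hp
    unfold Crossing at hnc
    by_cases h : p = (1, a + 1)
    · exact Or.inl h
    · rw [Prod.ext_iff] at h
      simp only [hp, true_and] at hnc h ⊢
      omega
  · rintro (rfl | ⟨hp, -⟩ | ⟨hp, -⟩) <;> assumption

lemma mem_nestedArcs (hA : IsDiagram n A) {p : ℕ × ℕ} (hp : p ∈ nestedArcs a A) :
    2 ≤ p.1 ∧ p.1 < p.2 ∧ p.2 ≤ a + 1 := by
  obtain ⟨hp, h⟩ := Finset.mem_filter.1 hp
  have := hA p hp
  omega

lemma mem_outerArcs (hA : IsDiagram n A) {p : ℕ × ℕ} (hp : p ∈ outerArcs a A) :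
    (p.1 = 1 ∨ a + 2 ≤ p.1) ∧ p.1 < p.2 ∧ a + 2 ≤ p.2 ∧ p.2 ≤ n := by
  obtain ⟨hp, h⟩ := Finset.mem_filter.1 hp
  have := hA p hp
  omega

lemma relabel_nestedArcs (hA : IsDiagram n A) :
    relabel (insertVertices 1 1) (relabel (removeVertices 1 1) (nestedArcs a A)) =
      nestedArcs a A :=
  relabel_insertVertices_removeVertices fun p hp => by have := mem_nestedArcs hA hp; omega

lemma relabel_outerArcs (hA : IsDiagram n A) :
    relabel (insertVertices 2 a) (relabel (removeVertices 2 a) (outerArcs a A)) =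
      outerArcs a A :=
  relabel_insertVertices_removeVertices fun p hp => by have := mem_outerArcs hA hp; omega

lemma isZigzag_relabel_nestedArcs (hA : IsZigzag n A) :
    IsZigzag a (relabel (removeVertices 1 1) (nestedArcs a A)) := by
  refine hA.relabel_removeVertices (Finset.filter_subset _ _)
    (fun p hp => by have := mem_nestedArcs hA.1.1 hp; omega) fun p hp => ?_
  obtain ⟨q, hq, rfl⟩ := exists_of_mem_relabel hp
  have := mem_nestedArcs hA.1.1 hq
  simp only [removeVertices]
  split_ifs <;> omega

lemma isZigzag_relabel_outerArcs (hA : IsZigzag n A) :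
    IsZigzag (n - a) (relabel (removeVertices 2 a) (outerArcs a A)) := by
  refine hA.relabel_removeVertices (Finset.filter_subset _ _)
    (fun p hp => by have := mem_outerArcs hA.1.1 hp; omega) fun p hp => ?_
  obtain ⟨q, hq, rfl⟩ := exists_of_mem_relabel hp
  have := mem_outerArcs hA.1.1 hq
  simp only [removeVertices]
  split_ifs <;> omega

lemma ld_relabel_nestedArcs_le_one (hA : IsZigzag n A) (ha : (1, a + 1) ∈ A) (ha1 : 1 ≤ a) :
    ld (relabel (removeVertices 1 1) (nestedArcs a A)) a ≤ 1 := by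
  have hld := ld_relabel (strictMono_insertVertices 1 1).injective
    (relabel (removeVertices 1 1) (nestedArcs a A)) a
  rw [insertVertices, if_neg (by omega), relabel_nestedArcs hA.1.1] at hld
  have hnot : (1, a + 1) ∉ nestedArcs a A := fun h => by have := mem_nestedArcs hA.1.1 h; omega
  have hsub : insert (1, a + 1) (nestedArcs a A) ⊆ A :=
    Finset.insert_subset ha (Finset.filter_subset _ _)
  have hins := ld_mono hsub (a + 1)
  rw [ld_insert hnot, if_pos rfl] at hins
  have := hA.2.1 (a + 1)
  unfold deg at this
  omega

lemma exists_eq_attachFirstArc (hA : IsZigzag n A) (h1 : rd A 1 ≠ 0) :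
    ∃ a b B C, a + b = n ∧ 1 ≤ a ∧ 1 ≤ b ∧ IsZigzag a B ∧ ld B a ≤ 1 ∧ IsZigzag b C ∧
      attachFirstArc a B C = A := by
  obtain ⟨a, ha1, han, ha, hmin⟩ := exists_shortest_arc_from_one hA.1.1 h1
  refine ⟨a, n - a, _, _, by omega, ha1, by omega, isZigzag_relabel_nestedArcs hA,
    ld_relabel_nestedArcs_le_one hA ha ha1, isZigzag_relabel_outerArcs hA, ?_⟩
  rw [attachFirstArc, relabel_nestedArcs hA.1.1, relabel_outerArcs hA.1.1,
    ← eq_insert_nestedArcs_union_outerArcs hA ha hmin]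

end Decompose

def reflect (n : ℕ) (A : Arcs) : Arcs := A.image fun p => (n + 1 - p.2, n + 1 - p.1)

section Reflect

variable {n : ℕ} {A : Arcs}

lemma isDiagram_reflect (hA : IsDiagram n A) : IsDiagram n (reflect n A) := by
  intro p hp
  obtain ⟨q, hq, rfl⟩ := Finset.mem_image.1 hp
  have := hA q hq
  simp only
  omega

lemma reflect_reflect (hA : IsDiagram n A) : reflect n (reflect n A) = A := by
  rw [reflect, reflect, Finset.image_image]
  refine (Finset.image_congr fun p hp => ?_).trans (Finset.image_id (s := A))
  have := hA p hp
  simp only [Function.comp_apply, id]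
  ext <;> simp only <;> omega

lemma injOn_reflect (hA : IsDiagram n A) :
    Set.InjOn (fun p : ℕ × ℕ => (n + 1 - p.2, n + 1 - p.1)) A := by
  intro p hp q hq h
  have := hA p hp
  have := hA q hq
  simp only [Prod.mk.injEq] at h
  ext <;> omega

lemma ld_reflect (hA : IsDiagram n A) (v : ℕ) : ld (reflect n A) v = rd A (n + 1 - v) := by
  unfold ld rd reflect
  rw [Finset.filter_image,
    Finset.card_image_of_injOn ((injOn_reflect hA).mono (Finset.filter_subset _ _))]
  congr 1
  refine Finset.filter_congr fun p hp => ?_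
  have := hA p hp
  dsimp only
  omega

lemma rd_reflect (hA : IsDiagram n A) (v : ℕ) : rd (reflect n A) v = ld A (n + 1 - v) := by
  unfold ld rd reflect
  rw [Finset.filter_image,
    Finset.card_image_of_injOn ((injOn_reflect hA).mono (Finset.filter_subset _ _))]
  congr 1
  refine Finset.filter_congr fun p hp => ?_
  have := hA p hp
  dsimp only
  omega

lemma isZigzag_reflect (hA : IsZigzag n A) : IsZigzag n (reflect n A) := by
  have hd := hA.1.1
  rw [isZigzag_iff] at hA ⊢
  refine ⟨⟨isDiagram_reflect hd, fun p' hp' q' hq' h => ?_⟩, fun v => ?_⟩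
  · obtain ⟨p, hp, rfl⟩ := Finset.mem_image.1 hp'
    obtain ⟨q, hq, rfl⟩ := Finset.mem_image.1 hq'
    have := hd p hp
    have := hd q hq
    unfold Crossing at h
    exact hA.1.2 q hq p hp ⟨by omega, by omega, by omega⟩
  · rw [ld_reflect hd, rd_reflect hd]
    exact (hA.2 _).symm

end Reflect

noncomputable def zigzagCountRd (r n : ℕ) : ℕ :=
  Nat.card {A : Arcs // IsZigzag n A ∧ rd A 1 ≤ r}

lemma finite_of_isDiagram {n : ℕ} {P : Arcs → Prop} (hP : ∀ A, P A → IsDiagram n A) :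
    Finite {A // P A} := by
  refine Set.Finite.to_subtype (s := {A | P A})
    ((Finset.Icc 1 n ×ˢ Finset.Icc 1 n).powerset.finite_toSet.subset fun A hA => ?_)
  refine Finset.mem_coe.2 (Finset.mem_powerset.2 fun p hp => ?_)
  have := hP A hA p hp
  simp only [Finset.mem_product, Finset.mem_Icc]
  omega

instance (r n : ℕ) : Finite {A : Arcs // IsZigzag n A ∧ rd A 1 ≤ r} :=
  finite_of_isDiagram fun _ hA => hA.1.1.1

instance (n : ℕ) : Finite {A : Arcs // IsZigzag n A ∧ ld A n ≤ 1} :=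
  finite_of_isDiagram fun _ hA => hA.1.1.1

lemma card_zigzag_ld_le_one (a : ℕ) :
    Nat.card {B : Arcs // IsZigzag a B ∧ ld B a ≤ 1} = zigzagCountRd 1 a := by
  refine Nat.card_congr
    { toFun := fun B => ⟨reflect a B, isZigzag_reflect B.2.1, ?_⟩
      invFun := fun A => ⟨reflect a A, isZigzag_reflect A.2.1, ?_⟩
      left_inv := fun B => Subtype.ext (reflect_reflect B.2.1.1.1)
      right_inv := fun A => Subtype.ext (reflect_reflect A.2.1.1.1) }
  · simpa [rd_reflect B.2.1.1.1] using B.2.2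
  · simpa [ld_reflect A.2.1.1.1] using A.2.2

lemma zigzagCountRd_two (n : ℕ) : zigzagCountRd 2 n = zigzagCount n :=
  Nat.card_congr <| Equiv.subtypeEquivRight fun A =>
    and_iff_left_of_imp fun hA => by have := hA.2.1 1; unfold deg at this; omega

lemma zigzagCountRd_zero_right (r : ℕ) : zigzagCountRd r 0 = 1 := by
  rw [zigzagCountRd, Nat.card_eq_one_iff_exists]
  refine ⟨⟨∅, isZigzag_zero_iff.2 rfl, by simp [rd]⟩, fun A => Subtype.ext ?_⟩
  exact isZigzag_zero_iff.1 A.2.1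

lemma zigzagCountRd_zero_succ (n : ℕ) : zigzagCountRd 0 (n + 1) = zigzagCount n := by
  have hrd : ∀ C : Arcs, rd (relabel (insertVertices 1 1) C) 1 = 0 := fun C =>
    rd_relabel_of_notMem_range (notMem_range_insertVertices le_rfl one_lt_two)
  symm
  refine Nat.card_eq_of_bijective
    (fun C => ⟨relabel (insertVertices 1 1) C.1, C.2.relabel_insertVertices 1 1, (hrd C).le⟩)
    ⟨fun C C' h => Subtype.ext (relabel_injective (strictMono_insertVertices 1 1).injective
      (congrArg Subtype.val h)), fun A => ?_⟩
  obtain ⟨A, hA, hA1⟩ := A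
  have hne : ∀ p ∈ A, p.1 ≠ 1 := rd_eq_zero_iff.1 (Nat.le_zero.1 hA1)
  have hgap : ∀ p ∈ A, (p.1 < 1 ∨ 1 + 1 ≤ p.1) ∧ (p.2 < 1 ∨ 1 + 1 ≤ p.2) := fun p hp => by
    have := hA.1.1 p hp
    have := hne p hp
    omega
  have hd : IsDiagram n (relabel (removeVertices 1 1) A) := fun p hp => by
    obtain ⟨q, hq, rfl⟩ := exists_of_mem_relabel hp
    have := hgap q hq
    have := hA.1.1 q hq
    simp only [removeVertices]
    split_ifs <;> omega
  exact ⟨⟨_, hA.relabel_removeVertices subset_rfl hgap hd⟩,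
    Subtype.ext (relabel_insertVertices_removeVertices hgap)⟩

open Finset in
lemma zigzagCountRd_succ_succ {r : ℕ} (hr : r ≤ 1) (n : ℕ) :
    zigzagCountRd (r + 1) (n + 1) = zigzagCount n +
      ∑ x ∈ (antidiagonal (n + 1)).filter (fun x => x.1 ≠ 0 ∧ x.2 ≠ 0),
        zigzagCountRd 1 x.1 * zigzagCountRd r x.2 := by
  set s := (antidiagonal (n + 1)).filter (fun x => x.1 ≠ 0 ∧ x.2 ≠ 0)
  have hs : ∀ x ∈ s, x.1 + x.2 = n + 1 ∧ 1 ≤ x.1 ∧ 1 ≤ x.2 := fun x hx => by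
    obtain ⟨hx, h⟩ := mem_filter.1 hx
    have := mem_antidiagonal.1 hx
    omega
  let F : {A : Arcs // IsZigzag (n + 1) A ∧ rd A 1 ≤ 0} ⊕
      (Σ x : s, {B : Arcs // IsZigzag x.1.1 B ∧ ld B x.1.1 ≤ 1} ×
        {C : Arcs // IsZigzag x.1.2 C ∧ rd C 1 ≤ r}) →
      {A : Arcs // IsZigzag (n + 1) A ∧ rd A 1 ≤ r + 1}
    | .inl A => ⟨A.1, A.2.1, by omega⟩
    | .inr ⟨x, B, C⟩ => ⟨attachFirstArc x.1.1 B.1 C.1, by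
        obtain ⟨hx, h1, h2⟩ := hs x.1 x.2
        rw [← hx]
        exact B.2.1.attachFirstArc B.2.2 C.2.1 (C.2.2.trans hr) h1 h2, by
        rw [rd_attachFirstArc_one B.2.1.1.1 C.2.1.1.1]
        omega⟩
  have hF : Function.Bijective F := by
    refine ⟨?_, fun A => ?_⟩
    · rintro (A | ⟨x, B, C⟩) (A' | ⟨x', B', C'⟩) h <;>
        have h := congrArg Subtype.val h <;> simp only [F] at h
      · exact congrArg Sum.inl (Subtype.ext h)
      · have := rd_attachFirstArc_one B'.2.1.1.1 C'.2.1.1.1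
        rw [← h] at this
        have := A.2.2
        omega
      · have := rd_attachFirstArc_one B.2.1.1.1 C.2.1.1.1
        rw [h] at this
        have := A'.2.2
        omega
      · obtain ⟨ha, hB, hC⟩ := attachFirstArc_inj B.2.1.1.1 C.2.1.1.1 B'.2.1.1.1 C'.2.1.1.1 h
        obtain rfl : x = x' := by
          have := hs x.1 x.2
          have := hs x'.1 x'.2
          ext <;> omega
        rw [Subtype.ext hB, Subtype.ext hC]
    · obtain ⟨A, hA, hA1⟩ := A
      by_cases h0 : rd A 1 = 0
      · exact ⟨.inl ⟨A, hA, h0.le⟩, rfl⟩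
      obtain ⟨a, b, B, C, hab, ha, hb, hB, hBa, hC, rfl⟩ := exists_eq_attachFirstArc hA h0
      have hx : (a, b) ∈ s := mem_filter.2 ⟨mem_antidiagonal.2 hab, by omega, by omega⟩
      rw [rd_attachFirstArc_one hB.1.1 hC.1.1] at hA1
      exact ⟨.inr ⟨⟨(a, b), hx⟩, ⟨B, hB, hBa⟩, ⟨C, hC, by omega⟩⟩, rfl⟩
  rw [zigzagCountRd, ← Nat.card_eq_of_bijective F hF, Nat.card_sum, Nat.card_sigma,
    ← zigzagCountRd, zigzagCountRd_zero_succ]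
  simp only [Nat.card_prod, card_zigzag_ld_le_one]
  exact congrArg _ (sum_coe_sort s fun x => zigzagCountRd 1 x.1 * zigzagCountRd r x.2)

open Finset in
lemma coeff_sub_one_mul_sub_one {R : Type*} [CommRing R] {P Q : PowerSeries R}
    (hP : constantCoeff P = 1) (hQ : constantCoeff Q = 1) (k : ℕ) :
    coeff k ((P - 1) * (Q - 1)) =
      ∑ x ∈ (antidiagonal k).filter (fun x => x.1 ≠ 0 ∧ x.2 ≠ 0),
        coeff x.1 P * coeff x.2 Q := by
  have h : ∀ {S : PowerSeries R}, constantCoeff S = 1 → ∀ i,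
      coeff i (S - 1) = if i ≠ 0 then coeff i S else 0 := fun hS i => by
    rcases eq_or_ne i 0 with rfl | hi
    · simp [hS]
    · simp [coeff_one, hi]
  rw [coeff_mul, Finset.sum_filter]
  refine Finset.sum_congr rfl fun x _ => ?_
  rw [h hP, h hQ]
  split_ifs <;> simp_all

noncomputable def zigzagSeriesRd (r : ℕ) : PowerSeries ℚ :=
  mk fun n => (zigzagCountRd r n : ℚ)

lemma constantCoeff_zigzagSeriesRd (r : ℕ) : constantCoeff (zigzagSeriesRd r) = 1 := by
  rw [← coeff_zero_eq_constantCoeff_apply, zigzagSeriesRd, coeff_mk, zigzagCountRd_zero_right,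
    Nat.cast_one]

lemma zigzagSeriesRd_zero : zigzagSeriesRd 0 = 1 + X * Zgf := by
  ext (_ | n)
  · simp [zigzagSeriesRd, zigzagCountRd_zero_right]
  · simp [zigzagSeriesRd, Zgf, coeff_one, coeff_succ_X_mul, zigzagCountRd_zero_succ]

lemma zigzagSeriesRd_succ {r : ℕ} (hr : r ≤ 1) :
    zigzagSeriesRd (r + 1) = 1 + X * Zgf + (zigzagSeriesRd 1 - 1) * (zigzagSeriesRd r - 1) := by
  ext (_ | n)
  · simp [zigzagSeriesRd, zigzagCountRd_zero_right]
  · rw [map_add, map_add, coeff_sub_one_mul_sub_one (constantCoeff_zigzagSeriesRd 1)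
      (constantCoeff_zigzagSeriesRd r)]
    simp [zigzagSeriesRd, Zgf, coeff_one, coeff_succ_X_mul, zigzagCountRd_succ_succ hr]

lemma zigzagSeriesRd_two : zigzagSeriesRd 2 = Zgf := by
  ext n
  simp [zigzagSeriesRd, Zgf, zigzagCountRd_two]

/-- `x²(x−1)Z³ + 2xZ² − (x+1)Z + 1 = 0` as formal power series. -/
theorem zigzag_gf_equation :
    Xq ^ 2 * (Xq - 1) * Zgf ^ 3 + 2 * Xq * Zgf ^ 2 - (Xq + 1) * Zgf + 1 = 0 := by
  have hG := zigzagSeriesRd_succ (r := 0) zero_le_one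
  have hZ := zigzagSeriesRd_succ (r := 1) le_rfl
  rw [zigzagSeriesRd_zero] at hG
  rw [zigzagSeriesRd_two] at hZ
  set G := zigzagSeriesRd 1
  unfold Xq
  linear_combination (-(1 - X * Zgf) ^ 2) * hZ - ((G - 1) * (1 - X * Zgf) + X * Zgf) * hG
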